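/- arXiv:1809.00157 — 5 statements merged into one kernel-verified Lean document; each statement's English description precedes it below -/
import Mathlib

section
/- Let g(z) = \sum_{k=0}^\infty b_k z^k be analytic on the unit disk with |g(z)| < 1 for all |z| < 1, and let 0 < R \le 1. Then \sum_{k=1}^\infty |b_k|^2 R^k \le R (1-|b_0|^2)^2 / (1 - |b_0|^2 R). -/
/-!
Write `A = ‖b 0‖²` and `S(x) = ∑_{k ≥ 1} ‖b k‖² x^k`. Composing `g` with the disc automorphism
moving `b 0` to `0` and applying Schwarz's lemma gives `‖g z - b 0‖ ≤ ‖z‖ ‖1 - conj (b 0) g z‖`.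
Integrating the square of this over the circle `‖z‖ = √x` and using Parseval's identity on both
sides gives `S(x) ≤ x ((1 - A)² + A S(x))`, i.e. `S(x) ≤ x (1 - A)² / (1 - A x)` for `x < 1`.
The right-hand side increases with `x`, and letting `x → R⁻` gives the bound at `R`.
-/

open Complex MeasureTheory Filter Topology Set Metric
open scoped Real ComplexConjugate

lemma normSq_one_sub_conj_mul_sub_normSq_sub (a w : ℂ) :
    normSq (1 - conj a * w) - normSq (w - a) = (1 - normSq a) * (1 - normSq w) := by
  simp only [normSq_apply, sub_re, sub_im, mul_re, mul_im, one_re, one_im, conj_re, conj_im]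
  ring

lemma norm_sub_lt_norm_one_sub_conj_mul {a w : ℂ} (ha : ‖a‖ < 1) (hw : ‖w‖ < 1) :
    ‖w - a‖ < ‖1 - conj a * w‖ := by
  have hpos : 0 < (1 - normSq a) * (1 - normSq w) := by
    rw [← Complex.sq_norm, ← Complex.sq_norm]
    exact mul_pos (by nlinarith [norm_nonneg a]) (by nlinarith [norm_nonneg w])
  rw [← pow_lt_pow_iff_left₀ (norm_nonneg _) (norm_nonneg _) two_ne_zero, Complex.sq_norm,
    Complex.sq_norm]
  linarith [normSq_one_sub_conj_mul_sub_normSq_sub a w]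

theorem norm_sub_apply_zero_le_norm_mul {g : ℂ → ℂ} (hd : DifferentiableOn ℂ g (ball 0 1))
    (hmaps : MapsTo g (ball 0 1) (ball 0 1)) {z : ℂ} (hz : ‖z‖ < 1) :
    ‖g z - g 0‖ ≤ ‖z‖ * ‖1 - conj (g 0) * g z‖ := by
  have hlt {w : ℂ} (hw : ‖w‖ < 1) : ‖g w - g 0‖ < ‖1 - conj (g 0) * g w‖ :=
    norm_sub_lt_norm_one_sub_conj_mul (mem_ball_zero_iff.mp (hmaps (mem_ball_self one_pos)))
      (mem_ball_zero_iff.mp (hmaps (mem_ball_zero_iff.mpr hw)))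
  have hden {w : ℂ} (hw : ‖w‖ < 1) : 1 - conj (g 0) * g w ≠ 0 :=
    norm_pos_iff.mp ((norm_nonneg _).trans_lt (hlt hw))
  set F : ℂ → ℂ := fun w ↦ (g w - g 0) / (1 - conj (g 0) * g w)
  have hF : ‖F z‖ ≤ ‖z‖ := by
    refine Complex.norm_le_norm_of_mapsTo_ball ?_ ?_ (by simp [F]) hz
    · exact (hd.sub_const _).div ((hd.const_mul _).const_sub _)
        fun w hw ↦ hden (mem_ball_zero_iff.mp hw)
    · intro w hw
      have hw := mem_ball_zero_iff.mp hw
      rw [mem_closedBall_zero_iff, norm_div, div_le_one (norm_pos_iff.mpr (hden hw))]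
      exact (hlt hw).le
  calc ‖g z - g 0‖ = ‖F z‖ * ‖1 - conj (g 0) * g z‖ := by
        rw [← norm_mul, div_mul_cancel₀ _ (hden hz)]
    _ ≤ ‖z‖ * ‖1 - conj (g 0) * g z‖ := by gcongr

lemma integral_exp_int_mul_mul_I (m : ℤ) :
    ∫ θ in (0)..2 * π, exp (m * θ * I) = if m = 0 then (2 * π : ℂ) else 0 := by
  split_ifs with hm
  · simp [hm]
  have hc : (m : ℂ) * I ≠ 0 := mul_ne_zero (Int.cast_ne_zero.mpr hm) I_ne_zero
  simp_rw [mul_right_comm _ _ I]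
  rw [integral_exp_mul_complex hc, div_eq_zero_iff, sub_eq_zero]
  left
  push_cast
  rw [mul_zero, exp_zero, show (m : ℂ) * I * (2 * π) = m * (2 * π * I) by ring,
    exp_int_mul_two_pi_mul_I]

section CircleSeries

variable {a : ℕ → ℂ} {r : ℝ} {F : ℝ → ℂ}

lemma continuous_of_hasSum_circleMap (ha : Summable fun k ↦ ‖a k‖ * |r| ^ k)
    (hF : ∀ θ, HasSum (fun k ↦ a k * circleMap 0 r θ ^ k) (F θ)) : Continuous F := by
  rw [show F = fun θ ↦ ∑' k, a k * circleMap 0 r θ ^ k from funext fun θ ↦ (hF θ).tsum_eq.symm]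
  exact continuous_tsum (fun k ↦ by fun_prop) ha fun k θ ↦ by simp [norm_circleMap_zero]

-- `fourierCoeffOn` on `[0, 2π]` uses the characters of `AddCircle (2 * π - 0)`.
lemma fourier_neg_smul_mul_circleMap_pow (n : ℤ) (k : ℕ) (c : ℂ) (θ : ℝ) :
    fourier (-n) (θ : AddCircle (2 * π - 0)) • (c * circleMap 0 r θ ^ k)
      = c * r ^ k * exp (((k - n : ℤ) : ℂ) * θ * I) := by
  rw [fourier_coe_apply, circleMap_zero, smul_eq_mul, mul_pow, ← exp_nat_mul]
  have : ((k - n : ℤ) : ℂ) * θ * I = 2 * π * I * (-n : ℤ) * θ / (2 * π - 0 : ℝ) + k * (θ * I) := by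
    field_simp
    push_cast
    ring
  rw [this, exp_add]
  ring

lemma hasSum_fourierCoeffOn_of_hasSum_circleMap (ha : Summable fun k ↦ ‖a k‖ * |r| ^ k)
    (hF : ∀ θ, HasSum (fun k ↦ a k * circleMap 0 r θ ^ k) (F θ)) (n : ℤ) :
    HasSum (fun k : ℕ ↦ if (k : ℤ) = n then a k * r ^ k else 0)
      (fourierCoeffOn Real.two_pi_pos F n) := by
  rw [fourierCoeffOn_eq_integral]
  have hint := intervalIntegral.hasSum_integral_of_dominated_convergence
    (F := fun k θ ↦ fourier (-n) (θ : AddCircle (2 * π - 0)) • (a k * circleMap 0 r θ ^ k))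
    (f := fun θ ↦ fourier (-n) (θ : AddCircle (2 * π - 0)) • F θ)
    (μ := volume) (a := 0) (b := 2 * π) (fun k _ ↦ ‖a k‖ * |r| ^ k)
    (fun k ↦ by fun_prop)
    (fun k ↦ .of_forall fun θ _ ↦ by rw [fourier_neg_smul_mul_circleMap_pow]; simp [norm_exp])
    (.of_forall fun _ _ ↦ ha) intervalIntegrable_const
    (.of_forall fun θ _ ↦ (hF θ).const_smul _)
  refine (hint.const_smul ((1 / (2 * π - 0) : ℝ))).congr_fun fun k ↦ ?_
  simp_rw [fourier_neg_smul_mul_circleMap_pow, intervalIntegral.integral_const_mul,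
    integral_exp_int_mul_mul_I, sub_eq_zero]
  split_ifs
  · rw [sub_zero, Complex.real_smul]
    push_cast
    field_simp
  · simp

theorem hasSum_norm_sq_mul_pow_of_hasSum_circleMap (ha : Summable fun k ↦ ‖a k‖ * |r| ^ k)
    (hF : ∀ θ, HasSum (fun k ↦ a k * circleMap 0 r θ ^ k) (F θ)) :
    HasSum (fun k ↦ ‖a k‖ ^ 2 * (r ^ 2) ^ k) ((2 * π)⁻¹ * ∫ θ in (0)..2 * π, ‖F θ‖ ^ 2) := by
  have hL2 : MemLp F 2 (volume.restrict (Ioc 0 (2 * π))) :=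
    .of_bound (continuous_of_hasSum_circleMap ha hF).aestronglyMeasurable (∑' k, ‖a k‖ * |r| ^ k)
      (.of_forall fun θ ↦ (hF θ).norm_le_of_bounded ha.hasSum fun k ↦ by
        simp [norm_circleMap_zero])
  have hparseval := hasSum_sq_fourierCoeffOn Real.two_pi_pos hL2
  rw [sub_zero, smul_eq_mul, ← Nat.cast_injective.hasSum_iff] at hparseval
  · refine hparseval.congr_fun fun k ↦ ?_
    have hcoeff : fourierCoeffOn Real.two_pi_pos F k = a k * r ^ k :=
      (hasSum_fourierCoeffOn_of_hasSum_circleMap ha hF k).unique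
        ((hasSum_ite_eq k (a k * r ^ k)).congr_fun fun j ↦ by
          rcases eq_or_ne j k with rfl | hj <;> simp [*])
    rw [Function.comp_apply, hcoeff, norm_mul, norm_pow, mul_pow, norm_real, Real.norm_eq_abs,
      ← pow_mul, ← pow_mul, mul_comm k, pow_mul, pow_mul, sq_abs]
  · rintro n hn
    have hk := hasSum_fourierCoeffOn_of_hasSum_circleMap ha hF n
    simp only [show ∀ k : ℕ, (k : ℤ) ≠ n from fun k hk ↦ hn ⟨k, hk⟩, if_false] at hk
    rw [hk.unique hasSum_zero, norm_zero, zero_pow two_ne_zero]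

end CircleSeries

section UnitDisc

variable {a : ℕ → ℂ} {f : ℂ → ℂ}

lemma one_le_radius_ofScalars (ha : ∀ z : ℂ, ‖z‖ < 1 → Summable fun k ↦ a k * z ^ k) :
    1 ≤ (FormalMultilinearSeries.ofScalars ℂ a).radius := by
  refine ENNReal.le_of_forall_nnreal_lt fun r hr ↦ ?_
  refine FormalMultilinearSeries.le_radius_of_tendsto _ (l := 0) ?_
  have hr : ‖(r : ℂ)‖ < 1 := by simpa using hr
  simpa [FormalMultilinearSeries.ofScalars_norm] using (ha _ hr).tendsto_atTop_zero.norm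

lemma summable_norm_mul_pow_of_summable
    (ha : ∀ z : ℂ, ‖z‖ < 1 → Summable fun k ↦ a k * z ^ k) {r : ℝ} (hr0 : 0 ≤ r) (hr1 : r < 1) :
    Summable fun k ↦ ‖a k‖ * r ^ k := by
  lift r to NNReal using hr0
  have := (FormalMultilinearSeries.ofScalars ℂ a).summable_norm_mul_pow
    ((ENNReal.coe_lt_one_iff.mpr hr1).trans_le (one_le_radius_ofScalars ha))
  simpa [FormalMultilinearSeries.ofScalars_norm] using this

lemma differentiableOn_ball_of_hasSum
    (ha : ∀ z : ℂ, ‖z‖ < 1 → HasSum (fun k ↦ a k * z ^ k) (f z)) :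
    DifferentiableOn ℂ f (ball 0 1) := by
  have hps : HasFPowerSeriesOnBall f (FormalMultilinearSeries.ofScalars ℂ a) 0 1 :=
    { r_le := one_le_radius_ofScalars fun z hz ↦ (ha z hz).summable
      r_pos := one_pos
      hasSum := fun {y} hy ↦ by
        have hy : ‖y‖ < 1 := by simpa [Metric.mem_eball, edist_zero_right, ← ofReal_norm] using hy
        simpa only [FormalMultilinearSeries.ofScalars_apply_eq, smul_eq_mul, zero_add]
          using ha y hy }
  simpa only [← ENNReal.coe_one, Metric.eball_coe, NNReal.coe_one] using hps.differentiableOn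

lemma apply_zero_eq_of_hasSum (ha : ∀ z : ℂ, ‖z‖ < 1 → HasSum (fun k ↦ a k * z ^ k) (f z)) :
    f 0 = a 0 :=
  (ha 0 (by simp)).unique (by
    simpa using hasSum_single (f := fun k ↦ a k * 0 ^ k) 0 (fun k hk ↦ by simp [hk]))

lemma norm_circleMap_sqrt_lt_one {x : ℝ} (hx : x < 1) (θ : ℝ) : ‖circleMap 0 √x θ‖ < 1 := by
  rw [norm_circleMap_zero, abs_of_nonneg (Real.sqrt_nonneg x), Real.sqrt_lt' one_pos]
  simpa using hx

theorem hasSum_norm_sq_mul_pow_of_hasSum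
    (hf : ∀ z : ℂ, ‖z‖ < 1 → HasSum (fun k ↦ a k * z ^ k) (f z)) {x : ℝ} (hx0 : 0 ≤ x)
    (hx1 : x < 1) :
    HasSum (fun k ↦ ‖a k‖ ^ 2 * x ^ k)
      ((2 * π)⁻¹ * ∫ θ in (0)..2 * π, ‖f (circleMap 0 √x θ)‖ ^ 2) := by
  have ha := summable_norm_mul_pow_of_summable (fun z hz ↦ (hf z hz).summable) (abs_nonneg √x)
    (by simpa using norm_circleMap_sqrt_lt_one hx1 0)
  simpa [Real.sq_sqrt hx0] using hasSum_norm_sq_mul_pow_of_hasSum_circleMap ha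
    fun θ ↦ hf _ (norm_circleMap_sqrt_lt_one hx1 θ)

lemma continuous_comp_circleMap_sqrt
    (hf : ∀ z : ℂ, ‖z‖ < 1 → HasSum (fun k ↦ a k * z ^ k) (f z)) {x : ℝ} (hx1 : x < 1) :
    Continuous fun θ ↦ f (circleMap 0 √x θ) :=
  (differentiableOn_ball_of_hasSum hf).continuousOn.comp_continuous (continuous_circleMap 0 _)
    fun θ ↦ mem_ball_zero_iff.mpr (norm_circleMap_sqrt_lt_one hx1 θ)

theorem tsum_norm_sq_mul_pow_le_of_norm_le {c : ℕ → ℂ} {h : ℂ → ℂ}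
    (hf : ∀ z : ℂ, ‖z‖ < 1 → HasSum (fun k ↦ a k * z ^ k) (f z))
    (hh : ∀ z : ℂ, ‖z‖ < 1 → HasSum (fun k ↦ c k * z ^ k) (h z))
    (hfh : ∀ z : ℂ, ‖z‖ < 1 → ‖f z‖ ≤ ‖z‖ * ‖h z‖) {x : ℝ} (hx0 : 0 ≤ x) (hx1 : x < 1) :
    ∑' k, ‖a k‖ ^ 2 * x ^ k ≤ x * ∑' k, ‖c k‖ ^ 2 * x ^ k := by
  rw [(hasSum_norm_sq_mul_pow_of_hasSum hf hx0 hx1).tsum_eq,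
    (hasSum_norm_sq_mul_pow_of_hasSum hh hx0 hx1).tsum_eq, mul_left_comm,
    ← intervalIntegral.integral_const_mul x]
  refine mul_le_mul_of_nonneg_left (intervalIntegral.integral_mono_on Real.two_pi_pos.le
    (((continuous_comp_circleMap_sqrt hf hx1).norm.pow 2).intervalIntegrable _ _)
    ((continuous_const.mul ((continuous_comp_circleMap_sqrt hh hx1).norm.pow 2)).intervalIntegrable
      _ _)
    fun θ _ ↦ ?_) (by positivity)
  calc ‖f (circleMap 0 √x θ)‖ ^ 2 ≤ (‖circleMap 0 √x θ‖ * ‖h (circleMap 0 √x θ)‖) ^ 2 := by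
        gcongr
        exact hfh _ (norm_circleMap_sqrt_lt_one hx1 θ)
    _ = x * ‖h (circleMap 0 √x θ)‖ ^ 2 := by
        rw [mul_pow, norm_circleMap_zero, sq_abs, Real.sq_sqrt hx0]

end UnitDisc

lemma hasSum_ite_zero_add_mul {b : ℕ → ℂ} {z w : ℂ} (hb : HasSum (fun k ↦ b k * z ^ k) w)
    (α β : ℂ) :
    HasSum (fun k ↦ ((if k = 0 then α else 0) + β * b k) * z ^ k) (α + β * w) :=
  ((hasSum_ite_eq 0 α).add (hb.mul_left β)).congr_fun fun k ↦ by
    split_ifs with hk <;> simp [hk]; ring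

lemma tsum_norm_sq_ite_zero_add_mul {b : ℕ → ℂ} {x : ℝ} (hb : Summable fun k ↦ ‖b k‖ ^ 2 * x ^ k)
    (α β : ℂ) :
    ∑' k, ‖(if k = 0 then α else 0) + β * b k‖ ^ 2 * x ^ k
      = ‖α + β * b 0‖ ^ 2 + ‖β‖ ^ 2 * ∑' k, ‖b (k + 1)‖ ^ 2 * x ^ (k + 1) := by
  have hshift := ((summable_nat_add_iff 1).mpr hb).mul_left (‖β‖ ^ 2)
  rw [tsum_eq_zero_add' (hshift.congr fun k ↦ by simp [mul_pow]; ring), ← tsum_mul_left]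
  simp [mul_pow, mul_assoc]

theorem tsum_norm_sq_succ_mul_pow_le {g : ℂ → ℂ} {b : ℕ → ℂ}
    (hg : ∀ z : ℂ, ‖z‖ < 1 → HasSum (fun k ↦ b k * z ^ k) (g z))
    (hbd : ∀ z : ℂ, ‖z‖ < 1 → ‖g z‖ < 1) {x : ℝ} (hx0 : 0 ≤ x) (hx1 : x < 1) :
    ∑' k, ‖b (k + 1)‖ ^ 2 * x ^ (k + 1) ≤ x * (1 - ‖b 0‖ ^ 2) ^ 2 / (1 - ‖b 0‖ ^ 2 * x) := by
  have hg0 := apply_zero_eq_of_hasSum hg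
  have hA : ‖b 0‖ ^ 2 < 1 := pow_lt_one₀ (norm_nonneg _) (hg0 ▸ hbd 0 (by simp)) two_ne_zero
  have hschwarz (z : ℂ) (hz : ‖z‖ < 1) :
      ‖-b 0 + 1 * g z‖ ≤ ‖z‖ * ‖1 + -conj (b 0) * g z‖ := by
    have := norm_sub_apply_zero_le_norm_mul (differentiableOn_ball_of_hasSum hg)
      (fun w hw ↦ mem_ball_zero_iff.mpr (hbd w (mem_ball_zero_iff.mp hw))) hz
    rw [hg0] at this
    convert this using 3 <;> ring
  have hcomp := tsum_norm_sq_mul_pow_le_of_norm_le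
    (fun z hz ↦ hasSum_ite_zero_add_mul (hg z hz) (-b 0) 1)
    (fun z hz ↦ hasSum_ite_zero_add_mul (hg z hz) 1 (-conj (b 0))) hschwarz hx0 hx1
  have hc0 : ‖1 + -conj (b 0) * b 0‖ = 1 - ‖b 0‖ ^ 2 := by
    rw [neg_mul, ← sub_eq_add_neg, conj_mul', ← ofReal_pow, ← ofReal_one, ← ofReal_sub,
      norm_real, Real.norm_of_nonneg (by linarith)]
  have hsum := (hasSum_norm_sq_mul_pow_of_hasSum hg hx0 hx1).summable
  rw [tsum_norm_sq_ite_zero_add_mul hsum, tsum_norm_sq_ite_zero_add_mul hsum, norm_neg,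
    RCLike.norm_conj, hc0, one_mul, neg_add_cancel, norm_zero, norm_one] at hcomp
  rw [le_div_iff₀ (by nlinarith)]
  nlinarith [hcomp]

lemma tsum_le_of_eventually_nhdsLT {f : ℕ → ℝ → ℝ} {R B : ℝ} (hf : ∀ k, ContinuousAt (f k) R)
    (h : ∀ᶠ x in 𝓝[<] R, (∀ k, 0 ≤ f k x) ∧ Summable (fun k ↦ f k x) ∧ ∑' k, f k x ≤ B) :
    ∑' k, f k R ≤ B := by
  obtain ⟨x, hx0, -, hxB⟩ := h.exists
  refine tsum_le_of_sum_le' ((tsum_nonneg hx0).trans hxB) fun s ↦ ?_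
  refine le_of_tendsto (tendsto_finsetSum s fun k _ ↦
    (hf k).tendsto.mono_left (nhdsWithin_le_nhds (s := Iio R))) ?_
  filter_upwards [h] with x ⟨hx0, hxs, hxB⟩
  exact (hxs.sum_le_tsum s fun k _ ↦ hx0 k).trans hxB

/-- Lemma (Kayumov–Ponnusamy): if `g(z) = ∑ b_k z^k` maps the unit disk into itself
and `0 < R ≤ 1`, then `∑_{k≥1} |b_k|² R^k ≤ R (1-|b₀|²)² / (1 - |b₀|² R)`. -/
theorem stmt_0 (g : ℂ → ℂ) (b : ℕ → ℂ) (R : ℝ)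
    (hg : ∀ z : ℂ, ‖z‖ < 1 → HasSum (fun k : ℕ => b k * z ^ k) (g z))
    (hbd : ∀ z : ℂ, ‖z‖ < 1 → ‖g z‖ < 1)
    (hR0 : 0 < R) (hR1 : R ≤ 1) :
    ∑' k : ℕ, ‖b (k + 1)‖ ^ 2 * R ^ (k + 1) ≤
      R * (1 - ‖b 0‖ ^ 2) ^ 2 / (1 - ‖b 0‖ ^ 2 * R) := by
  have hA : ‖b 0‖ ^ 2 < 1 :=
    pow_lt_one₀ (norm_nonneg _) (apply_zero_eq_of_hasSum hg ▸ hbd 0 (by simp)) two_ne_zero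
  refine tsum_le_of_eventually_nhdsLT (f := fun k x ↦ ‖b (k + 1)‖ ^ 2 * x ^ (k + 1))
    (fun k ↦ by fun_prop) ?_
  filter_upwards [Ioo_mem_nhdsLT hR0] with x ⟨hx0, hxR⟩
  have hx1 : x < 1 := hxR.trans_le hR1
  refine ⟨fun k ↦ by positivity,
    (summable_nat_add_iff 1).mpr (hasSum_norm_sq_mul_pow_of_hasSum hg hx0.le hx1).summable, ?_⟩
  calc ∑' k, ‖b (k + 1)‖ ^ 2 * x ^ (k + 1) ≤ x * (1 - ‖b 0‖ ^ 2) ^ 2 / (1 - ‖b 0‖ ^ 2 * x) :=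
        tsum_norm_sq_succ_mul_pow_le hg hbd hx0.le hx1
    _ ≤ R * (1 - ‖b 0‖ ^ 2) ^ 2 / (1 - ‖b 0‖ ^ 2 * R) := by
        rw [div_le_div_iff₀ (by nlinarith) (by nlinarith)]
        nlinarith [mul_nonneg (sq_nonneg (1 - ‖b 0‖ ^ 2)) (sub_nonneg.mpr hxR.le)]
end

section
/- For every p with 0 < p < 2, define r_p = inf_{a \in [0,1)} (1 - a^p) / (a^p(1-a^p) + (1-a^2)^p). Then r_p < (1/2)^{1 - p/2}. -/
/-- For `0 < p < 2`, the powered Bohr radius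
`r_p = inf_{a ∈ [0,1)} (1-a^p)/(a^p(1-a^p)+(1-a²)^p)` satisfies `r_p < (1/2)^(1-p/2)`. -/
theorem stmt_1 (p : ℝ) (hp0 : 0 < p) (hp2 : p < 2) :
    sInf {x : ℝ | ∃ a : ℝ, 0 ≤ a ∧ a < 1 ∧
        x = (1 - a ^ p) / (a ^ p * (1 - a ^ p) + (1 - a ^ 2) ^ p)} <
      (1 / 2 : ℝ) ^ (1 - p / 2) := by
  set S := {x : ℝ | ∃ a : ℝ, 0 ≤ a ∧ a < 1 ∧
        x = (1 - a ^ p) / (a ^ p * (1 - a ^ p) + (1 - a ^ 2) ^ p)} with hS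
  set t : ℝ := (1/2 : ℝ) ^ (p/2) with ht
  have htpos : 0 < t := Real.rpow_pos_of_pos (by norm_num) _
  have ht1 : t < 1 := Real.rpow_lt_one (by norm_num) (by norm_num) (by linarith)
  have ht2 : (1/2 : ℝ) < t := by
    have h := Real.rpow_lt_rpow_of_exponent_gt (x := (1/2:ℝ)) (by norm_num) (by norm_num)
      (show p/2 < 1 by linarith)
    rwa [Real.rpow_one] at h
  set a : ℝ := (1/2 : ℝ) ^ ((1:ℝ)/2) with ha
  have hapos : 0 < a := Real.rpow_pos_of_pos (by norm_num) _
  have ha1 : a < 1 := Real.rpow_lt_one (by norm_num) (by norm_num) (by norm_num)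
  have ha2 : a ^ 2 = 1/2 := by
    rw [ha, ← Real.rpow_natCast ((1/2:ℝ) ^ ((1:ℝ)/2)) 2, ← Real.rpow_mul (by norm_num)]
    norm_num
  have hap : a ^ p = t := by
    rw [ha, ht, ← Real.rpow_mul (by norm_num)]
    ring_nf
  have hmem : (1 - t) / t ∈ S := by
    refine ⟨a, le_of_lt hapos, ha1, ?_⟩
    rw [hap, ha2]
    have h12 : ((1:ℝ) - 1/2) ^ p = t ^ 2 := by
      rw [ht, ← Real.rpow_natCast ((1/2:ℝ) ^ (p/2)) 2, ← Real.rpow_mul (by norm_num)]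
      norm_num
    rw [h12]
    congr 1
    ring
  have hbdd : BddBelow S := by
    refine ⟨0, fun x hx => ?_⟩
    obtain ⟨b, hb0, hb1, rfl⟩ := hx
    have hbp : b ^ p ≤ 1 := Real.rpow_le_one hb0 (le_of_lt hb1) (le_of_lt hp0)
    have hb2 : b ^ 2 ≤ 1 := by nlinarith
    apply div_nonneg (by linarith)
    have h1 : (0:ℝ) ≤ b ^ p := Real.rpow_nonneg hb0 _
    have h2 : (0:ℝ) ≤ (1 - b ^ 2) ^ p := Real.rpow_nonneg (by linarith) _
    nlinarith
  have hle : sInf S ≤ (1 - t) / t := csInf_le hbdd hmem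
  have hrhs : (1/2 : ℝ) ^ (1 - p/2) = (1/2) / t := by
    rw [ht, Real.rpow_sub (by norm_num : (0:ℝ) < 1/2), Real.rpow_one]
  calc sInf S ≤ (1 - t) / t := hle
    _ < (1/2) / t := by
        rw [div_lt_div_iff₀ htpos htpos]
        nlinarith
    _ = (1/2 : ℝ) ^ (1 - p/2) := hrhs.symm
end

section
/- Let f(z) = \sum_{k=0}^\infty a_k z^k be analytic on the unit disk with |f(z)| < 1, and let 0 < p < 2. Then for all r with 2^{p/2-1} < r < 1, \sum_{k=0}^\infty |a_k|^p r^k \le (1 - r^{2/(2-p)})^{-(1-p/2)}. -/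
/-!
Sampling a partial sum `∑_{k<N} a_k z^k` at the `N`-th roots of unity and using their
orthogonality gives `∑_{k<N} |a_k|² ≤ max_{|z|=1} |∑_{k<N} a_k z^k|²`. Applied on the circle
`|z| = ρ < 1`, where the partial sums of `f` converge uniformly to a function bounded by `1`, this
yields `∑ |a_k|² ρ^{2k} ≤ 1`, hence `∑ |a_k|² ≤ 1`. Hölder's inequality with the conjugate exponents
`2/p` and `2/(2-p)` then bounds `∑ |a_k|^p r^k` by `(∑ |a_k|²)^{p/2} (∑ r^{2k/(2-p)})^{1-p/2}`.
-/

open Finset Filter Topology ComplexConjugate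

theorem IsPrimitiveRoot.sum_pow_mul_conj_pow {ζ : ℂ} {N : ℕ} (hζ : IsPrimitiveRoot ζ N)
    {k l : ℕ} (hk : k < N) (hl : l < N) :
    ∑ j ∈ range N, (ζ ^ j) ^ k * conj ((ζ ^ j) ^ l) = if k = l then (N : ℂ) else 0 := by
  have hN : N ≠ 0 := by omega
  have hζζ : conj ζ * ζ = 1 := by
    rw [Complex.conj_mul', hζ.norm'_eq_one hN]; simp
  set w := ζ ^ k * conj ζ ^ l
  have hw : ∀ j, (ζ ^ j) ^ k * conj ((ζ ^ j) ^ l) = w ^ j := fun j => by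
    simp only [w, map_pow, mul_pow, ← pow_mul, mul_comm j]
  simp only [hw]
  split_ifs with hkl
  · subst hkl
    have : w = 1 := by simp only [w, ← mul_pow, mul_comm ζ, hζζ, one_pow]
    simp [this]
  · have hwN : w ^ N = 1 := by
      rw [mul_pow, ← pow_mul, ← pow_mul, mul_comm k, mul_comm l, pow_mul, pow_mul, ← map_pow,
        hζ.pow_eq_one]
      simp
    have hw1 : w ≠ 1 := by
      intro h
      refine hkl (hζ.pow_inj hk hl ?_)
      calc ζ ^ k = w * ζ ^ l := by simp only [w, mul_assoc, ← mul_pow, hζζ, one_pow, mul_one]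
        _ = ζ ^ l := by rw [h, one_mul]
    rw [geom_sum_eq hw1, hwN, sub_self, zero_div]

theorem IsPrimitiveRoot.sum_norm_sq_sum_mul_pow {ζ : ℂ} {N : ℕ} (hζ : IsPrimitiveRoot ζ N)
    (a : ℕ → ℂ) :
    ∑ j ∈ range N, ‖∑ k ∈ range N, a k * (ζ ^ j) ^ k‖ ^ 2 = N * ∑ k ∈ range N, ‖a k‖ ^ 2 := by
  apply Complex.ofReal_injective
  push_cast
  simp only [← Complex.mul_conj', map_sum, map_mul, sum_mul_sum]
  calc _ = ∑ k ∈ range N, ∑ l ∈ range N, a k * conj (a l) *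
          ∑ j ∈ range N, (ζ ^ j) ^ k * conj ((ζ ^ j) ^ l) := by
        rw [sum_comm]
        refine sum_congr rfl fun k _ => ?_
        rw [sum_comm]
        simp only [mul_sum]
        refine sum_congr rfl fun l _ => sum_congr rfl fun j _ => ?_
        simp only [map_pow]; ring
    _ = N * ∑ k ∈ range N, a k * conj (a k) := by
        rw [mul_sum]
        refine sum_congr rfl fun k hk => ?_
        rw [sum_eq_single k]
        · rw [hζ.sum_pow_mul_conj_pow (mem_range.1 hk) (mem_range.1 hk), if_pos rfl]; ring
        · intro l hl hlk
          rw [hζ.sum_pow_mul_conj_pow (mem_range.1 hk) (mem_range.1 hl), if_neg (Ne.symm hlk),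
            mul_zero]
        · exact fun h => absurd hk h

theorem sum_norm_sq_le_sq_of_norm_sum_mul_pow_le (a : ℕ → ℂ) {N : ℕ} (hN : N ≠ 0) {M : ℝ}
    (h : ∀ z : ℂ, ‖z‖ = 1 → ‖∑ k ∈ range N, a k * z ^ k‖ ≤ M) :
    ∑ k ∈ range N, ‖a k‖ ^ 2 ≤ M ^ 2 := by
  obtain ⟨ζ, hζ⟩ : ∃ ζ : ℂ, IsPrimitiveRoot ζ N := ⟨_, Complex.isPrimitiveRoot_exp N hN⟩
  have hsum : ∑ j ∈ range N, ‖∑ k ∈ range N, a k * (ζ ^ j) ^ k‖ ^ 2 ≤ ∑ j ∈ range N, M ^ 2 :=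
    sum_le_sum fun j _ =>
      pow_le_pow_left₀ (norm_nonneg _) (h _ (by rw [norm_pow, hζ.norm'_eq_one hN, one_pow])) 2
  rw [hζ.sum_norm_sq_sum_mul_pow, sum_const, card_range, nsmul_eq_mul] at hsum
  exact le_of_mul_le_mul_left hsum (by positivity)

theorem summable_norm_mul_pow_of_summable_s5 {𝕜 : Type*} [NormedField 𝕜] {c : ℕ → 𝕜} {z : 𝕜}
    (hz : Summable fun k => c k * z ^ k) {ρ : ℝ} (hρ0 : 0 ≤ ρ) (hρz : ρ < ‖z‖) :
    Summable fun k => ‖c k‖ * ρ ^ k := by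
  obtain ⟨C, hC⟩ : ∃ C, ∀ k, ‖c k * z ^ k‖ ≤ C := by
    obtain ⟨C, hC⟩ := hz.tendsto_atTop_zero.norm.bddAbove_range
    exact ⟨C, fun k => hC (Set.mem_range_self k)⟩
  have hz0 : 0 < ‖z‖ := hρ0.trans_lt hρz
  have hq1 : ρ / ‖z‖ < 1 := (div_lt_one hz0).2 hρz
  refine .of_nonneg_of_le (fun k => by positivity) (fun k => ?_)
    ((summable_geometric_of_lt_one (by positivity) hq1).mul_left C)
  calc ‖c k‖ * ρ ^ k = ‖c k * z ^ k‖ * (ρ / ‖z‖) ^ k := by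
        rw [norm_mul, norm_pow, div_pow]; field_simp
    _ ≤ C * (ρ / ‖z‖) ^ k := by gcongr; exact hC k

theorem norm_sub_sum_range_le_tsum_nat_add {E : Type*} [NormedAddCommGroup E] {f : ℕ → E}
    {s : E} {g : ℕ → ℝ} (hf : HasSum f s) (hg : Summable g) (hfg : ∀ k, ‖f k‖ ≤ g k) (N : ℕ) :
    ‖s - ∑ k ∈ range N, f k‖ ≤ ∑' k, g (k + N) := by
  rw [← hf.tsum_eq, ← hf.summable.sum_add_tsum_nat_add N, add_sub_cancel_left]
  exact tsum_of_norm_bounded ((summable_nat_add_iff N).2 hg).hasSum fun k => hfg (k + N)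

section BoundedPowerSeries

variable {f : ℂ → ℂ} {c : ℕ → ℂ}

theorem norm_sum_range_mul_pow_le (hf : ∀ z : ℂ, ‖z‖ < 1 → HasSum (fun k => c k * z ^ k) (f z))
    (hbd : ∀ z : ℂ, ‖z‖ < 1 → ‖f z‖ < 1) {ρ : ℝ} (hρ1 : ρ < 1)
    (hs : Summable fun k => ‖c k‖ * ρ ^ k) {w : ℂ} (hw : ‖w‖ ≤ ρ) (N : ℕ) :
    ‖∑ k ∈ range N, c k * w ^ k‖ ≤ 1 + ∑' k, ‖c (k + N)‖ * ρ ^ (k + N) := by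
  have hw1 : ‖w‖ < 1 := hw.trans_lt hρ1
  have htail := norm_sub_sum_range_le_tsum_nat_add (hf w hw1) hs
    (fun k => by rw [norm_mul, norm_pow]; gcongr) N
  calc ‖∑ k ∈ range N, c k * w ^ k‖
      = ‖f w - (f w - ∑ k ∈ range N, c k * w ^ k)‖ := by rw [sub_sub_cancel]
    _ ≤ ‖f w‖ + ‖f w - ∑ k ∈ range N, c k * w ^ k‖ := norm_sub_le _ _
    _ ≤ 1 + ∑' k, ‖c (k + N)‖ * ρ ^ (k + N) := add_le_add (hbd w hw1).le htail

theorem sum_range_sq_norm_mul_pow_le_one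
    (hf : ∀ z : ℂ, ‖z‖ < 1 → HasSum (fun k => c k * z ^ k) (f z))
    (hbd : ∀ z : ℂ, ‖z‖ < 1 → ‖f z‖ < 1) {ρ : ℝ} (hρ0 : 0 ≤ ρ) (hρ1 : ρ < 1) (n : ℕ) :
    ∑ k ∈ range n, (‖c k‖ * ρ ^ k) ^ 2 ≤ 1 := by
  have hs : Summable fun k => ‖c k‖ * ρ ^ k := by
    have hρ' : ‖(((1 + ρ) / 2 : ℝ) : ℂ)‖ = (1 + ρ) / 2 := by
      rw [Complex.norm_real, Real.norm_of_nonneg (by linarith)]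
    exact summable_norm_mul_pow_of_summable_s5 (hf _ (by rw [hρ']; linarith)).summable hρ0
      (by rw [hρ']; linarith)
  set δ : ℕ → ℝ := fun N => ∑' k, ‖c (k + N)‖ * ρ ^ (k + N)
  have hbound : ∀ N ≥ max n 1, ∑ k ∈ range n, (‖c k‖ * ρ ^ k) ^ 2 ≤ (1 + δ N) ^ 2 := by
    intro N hN
    have hnorm : ∀ k, ‖c k * (ρ : ℂ) ^ k‖ = ‖c k‖ * ρ ^ k := fun k => by
      rw [norm_mul, norm_pow, Complex.norm_real, Real.norm_of_nonneg hρ0]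
    calc ∑ k ∈ range n, (‖c k‖ * ρ ^ k) ^ 2 ≤ ∑ k ∈ range N, ‖c k * (ρ : ℂ) ^ k‖ ^ 2 := by
          simp only [hnorm]
          exact sum_le_sum_of_subset_of_nonneg (range_subset_range.2 (le_of_max_le_left hN))
            fun k _ _ => by positivity
      _ ≤ (1 + δ N) ^ 2 := by
          refine sum_norm_sq_le_sq_of_norm_sum_mul_pow_le _ (by omega) fun z hz => ?_
          simp only [mul_assoc, ← mul_pow]
          refine norm_sum_range_mul_pow_le hf hbd hρ1 hs ?_ N
          rw [norm_mul, hz, mul_one, Complex.norm_real, Real.norm_of_nonneg hρ0]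
  have hlim : Tendsto (fun N => (1 + δ N) ^ 2) atTop (𝓝 1) := by
    simpa using ((tendsto_sum_nat_add fun k => ‖c k‖ * ρ ^ k).const_add 1).pow 2
  exact ge_of_tendsto hlim (eventually_atTop.2 ⟨_, hbound⟩)

theorem sum_range_sq_norm_le_one
    (hf : ∀ z : ℂ, ‖z‖ < 1 → HasSum (fun k => c k * z ^ k) (f z))
    (hbd : ∀ z : ℂ, ‖z‖ < 1 → ‖f z‖ < 1) (n : ℕ) :
    ∑ k ∈ range n, ‖c k‖ ^ 2 ≤ 1 := by
  have hcont : Continuous fun ρ : ℝ => ∑ k ∈ range n, (‖c k‖ * ρ ^ k) ^ 2 := by fun_prop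
  have hlim := (hcont.tendsto 1).mono_left (nhdsWithin_le_nhds (s := Set.Iio 1))
  have hle := le_of_tendsto hlim <| by
    filter_upwards [Ioo_mem_nhdsLT zero_lt_one] with ρ hρ
    exact sum_range_sq_norm_mul_pow_le_one hf hbd hρ.1.le hρ.2 n
  simpa using hle

end BoundedPowerSeries

theorem tsum_rpow_mul_pow_le_of_summable_sq {a : ℕ → ℝ} (ha : ∀ k, 0 ≤ a k)
    (ha2 : Summable fun k => a k ^ 2) {p r : ℝ} (hp0 : 0 < p) (hp2 : p < 2) (hr0 : 0 ≤ r)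
    (hr1 : r < 1) :
    ∑' k, a k ^ p * r ^ k ≤
      (∑' k, a k ^ 2) ^ (p / 2) * (1 - r ^ (2 / (2 - p))) ^ (-(1 - p / 2)) := by
  have h2p : 0 < 2 - p := by linarith
  set q := 2 / (2 - p)
  have hpq : (2 / p).HolderConjugate q := by
    refine ⟨?_, by positivity, by positivity⟩
    rw [inv_div, inv_div, inv_one]; ring
  have hrq0 : 0 ≤ r ^ q := by positivity
  have hrq1 : r ^ q < 1 := Real.rpow_lt_one hr0 hr1 hpq.symm.pos
  have hA : ∀ k, (a k ^ p) ^ (2 / p) = a k ^ 2 := fun k => by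
    rw [← Real.rpow_mul (ha k), mul_div_cancel₀ _ hp0.ne', Real.rpow_two]
  have hB : ∀ k : ℕ, (r ^ k) ^ q = (r ^ q) ^ k := fun k => by
    rw [← Real.rpow_natCast, ← Real.rpow_mul hr0, mul_comm, Real.rpow_mul hr0, Real.rpow_natCast]
  calc ∑' k, a k ^ p * r ^ k
      ≤ (∑' k, (a k ^ p) ^ (2 / p)) ^ (1 / (2 / p)) * (∑' k : ℕ, (r ^ k) ^ q) ^ (1 / q) :=
        Real.inner_le_Lp_mul_Lq_tsum_of_nonneg hpq (fun k => Real.rpow_nonneg (ha k) p)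
          (fun k => by positivity)
          (by simpa only [hA] using ha2)
          (by simpa only [hB] using summable_geometric_of_lt_one hrq0 hrq1)
    _ = (∑' k, a k ^ 2) ^ (p / 2) * (1 - r ^ q) ^ (-(1 - p / 2)) := by
        have h1 : 0 ≤ 1 - r ^ q := by linarith
        simp only [hA, hB, tsum_geometric_of_lt_one hrq0 hrq1, one_div_div,
          Real.inv_rpow h1, ← Real.rpow_neg h1]
        congr 2
        simp only [q]; field_simp

/-- Theorem 1, second part: for `f ∈ 𝓑`, `0 < p < 2` and `2^(p/2-1) < r < 1`,
`∑ |a_k|^p r^k ≤ (1 - r^(2/(2-p)))^(-(1-p/2))`. -/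
theorem stmt_5 (f : ℂ → ℂ) (c : ℕ → ℂ) (p r : ℝ)
    (hf : ∀ z : ℂ, ‖z‖ < 1 → HasSum (fun k : ℕ => c k * z ^ k) (f z))
    (hbd : ∀ z : ℂ, ‖z‖ < 1 → ‖f z‖ < 1)
    (hp0 : 0 < p) (hp2 : p < 2)
    (hr : (2 : ℝ) ^ (p / 2 - 1) < r) (hr1 : r < 1) :
    ∑' k : ℕ, ‖c k‖ ^ p * r ^ k ≤
      (1 - r ^ (2 / (2 - p))) ^ (-(1 - p / 2)) := by
  have hr0 : 0 < r := (Real.rpow_pos_of_pos two_pos _).trans hr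
  have hc : ∀ n, ∑ k ∈ range n, ‖c k‖ ^ 2 ≤ 1 := sum_range_sq_norm_le_one hf hbd
  have hsq : Summable fun k => ‖c k‖ ^ 2 := summable_of_sum_range_le (fun k => by positivity) hc
  have hsq_le : (∑' k, ‖c k‖ ^ 2) ^ (p / 2) ≤ 1 :=
    Real.rpow_le_one (tsum_nonneg fun k => by positivity)
      (Real.tsum_le_of_sum_range_le (fun k => by positivity) hc) (by positivity)
  have hgeom_nonneg : 0 ≤ 1 - r ^ (2 / (2 - p)) :=
    sub_nonneg.2 (Real.rpow_le_one hr0.le hr1.le (div_nonneg zero_le_two (by linarith)))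
  calc ∑' k, ‖c k‖ ^ p * r ^ k
      ≤ (∑' k, ‖c k‖ ^ 2) ^ (p / 2) * (1 - r ^ (2 / (2 - p))) ^ (-(1 - p / 2)) :=
        tsum_rpow_mul_pow_le_of_summable_sq (fun k => norm_nonneg _) hsq hp0 hp2 hr0.le hr1
    _ ≤ (1 - r ^ (2 / (2 - p))) ^ (-(1 - p / 2)) :=
        mul_le_of_le_one_left (Real.rpow_nonneg hgeom_nonneg _) hsq_le
end

section
/- For 1/3 \le r \le 1/\sqrt{2}, the maximum over a \in [0,1] of a + r(1-a^2)/(1 - r a) equals (3 - 2\sqrt{2}\sqrt{1-r^2})/r, and it is attained at a = (1 - \sqrt{(1-r^2)/2})/r. -/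
/-!
In the variable `d = 1 - r a` the objective becomes `(3 - 2 d - (1 - r²) / d) / r`, and by AM-GM
`2 d + (1 - r²) / d = 2 d + 2 s² / d ≥ 4 s` with `s = √((1 - r²) / 2)`, with equality at `d = s`,
i.e. at `a = (1 - s) / r`. This point lies in `[0, 1]` exactly when `1 - r ≤ s`, i.e. `r ≥ 1/3`.
-/

open Real

theorem add_mul_one_sub_sq_div_eq {K : Type*} [Field K] {r a : K} (hr : r ≠ 0)
    (hd : 1 - r * a ≠ 0) :
    a + r * (1 - a ^ 2) / (1 - r * a) = (3 - 2 * (1 - r * a) - (1 - r ^ 2) / (1 - r * a)) / r := by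
  rw [add_div' _ _ _ hd, sub_div' hd, div_div, div_eq_div_iff hd (mul_ne_zero hd hr)]
  ring

theorem four_mul_le_two_mul_add_two_mul_sq_div {d s : ℝ} (hd : 0 < d) :
    4 * s ≤ 2 * d + 2 * s ^ 2 / d := by
  have h : 2 * d + 2 * s ^ 2 / d - 4 * s = 2 * (d - s) ^ 2 / d := by
    field_simp
    ring
  have : 0 ≤ 2 * (d - s) ^ 2 / d := by positivity
  linarith

theorem two_mul_sqrt_two_mul_sqrt (x : ℝ) : 2 * √2 * √x = 4 * √(x / 2) := by
  have h2 : √2 ^ 2 = 2 := sq_sqrt zero_le_two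
  have h2pos : 0 < √2 := sqrt_pos.2 zero_lt_two
  rw [sqrt_div' x zero_le_two]
  field_simp
  rw [h2]
  ring

section

variable {r : ℝ}

theorem sq_sqrt_one_sub_sq_div_two (hr0 : 0 ≤ r) (hr1 : r ≤ 1) :
    √((1 - r ^ 2) / 2) ^ 2 = (1 - r ^ 2) / 2 :=
  sq_sqrt (by nlinarith)

theorem add_mul_one_sub_sq_div_le (hr0 : 0 < r) (hr1 : r ≤ 1) {a : ℝ} (hd : 0 < 1 - r * a) :
    a + r * (1 - a ^ 2) / (1 - r * a) ≤ (3 - 4 * √((1 - r ^ 2) / 2)) / r := by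
  rw [add_mul_one_sub_sq_div_eq hr0.ne' hd.ne']
  apply div_le_div_of_nonneg_right _ hr0.le
  have amgm := four_mul_le_two_mul_add_two_mul_sq_div (s := √((1 - r ^ 2) / 2)) hd
  rw [sq_sqrt_one_sub_sq_div_two hr0.le hr1] at amgm
  have : 2 * ((1 - r ^ 2) / 2) / (1 - r * a) = (1 - r ^ 2) / (1 - r * a) := by ring
  linarith

theorem add_mul_one_sub_sq_div_eq_at_opt (hr0 : 0 < r) (hr1 : r < 1) :
    let a := (1 - √((1 - r ^ 2) / 2)) / r
    a + r * (1 - a ^ 2) / (1 - r * a) = (3 - 4 * √((1 - r ^ 2) / 2)) / r := by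
  intro a
  have hs := sq_sqrt_one_sub_sq_div_two hr0.le hr1.le
  have hd : 1 - r * a = √((1 - r ^ 2) / 2) := by
    simp only [a]
    field_simp
    ring
  have hspos : 0 < √((1 - r ^ 2) / 2) := sqrt_pos.2 (by nlinarith)
  rw [add_mul_one_sub_sq_div_eq hr0.ne' (hd ▸ hspos.ne'), hd]
  congr 1
  field_simp
  linear_combination 2 * hs

theorem one_sub_sqrt_div_mem_Icc (hr : 1 / 3 ≤ r) (hr1 : r ≤ 1) :
    (1 - √((1 - r ^ 2) / 2)) / r ∈ Set.Icc (0 : ℝ) 1 := by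
  have hs := sq_sqrt_one_sub_sq_div_two (by linarith) hr1
  have hs0 : 0 ≤ √((1 - r ^ 2) / 2) := sqrt_nonneg _
  have hpos : 0 < r := by linarith
  -- after squaring: `2 (1 - r)² ≤ (1 - r)(1 + r)` for `r ≥ 1/3`
  have hlow : 1 - r ≤ √((1 - r ^ 2) / 2) := by
    nlinarith [sq_nonneg (√((1 - r ^ 2) / 2) - (1 - r))]
  constructor
  · apply div_nonneg _ hpos.le
    nlinarith
  · rw [div_le_one hpos]
    linarith

end

/-- Optimization lemma: for `1/3 ≤ r ≤ 1/√2`, the maximum over `a ∈ [0,1]` of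
`a + r(1-a²)/(1-ra)` equals `(3 - 2√2√(1-r²))/r`, attained at `a = (1 - √((1-r²)/2))/r`. -/
theorem stmt_8 (r : ℝ) (hr1 : 1 / 3 ≤ r) (hr2 : r ≤ 1 / Real.sqrt 2) :
    IsGreatest {y : ℝ | ∃ a ∈ Set.Icc (0 : ℝ) 1, y = a + r * (1 - a ^ 2) / (1 - r * a)}
      ((3 - 2 * Real.sqrt 2 * Real.sqrt (1 - r ^ 2)) / r) ∧
    (1 - Real.sqrt ((1 - r ^ 2) / 2)) / r ∈ Set.Icc (0 : ℝ) 1 ∧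
    (1 - Real.sqrt ((1 - r ^ 2) / 2)) / r +
        r * (1 - ((1 - Real.sqrt ((1 - r ^ 2) / 2)) / r) ^ 2) /
          (1 - r * ((1 - Real.sqrt ((1 - r ^ 2) / 2)) / r)) =
      (3 - 2 * Real.sqrt 2 * Real.sqrt (1 - r ^ 2)) / r := by
  have hr0 : 0 < r := by linarith
  have hr_lt_one : r < 1 := by
    have : 1 < √2 := by rw [lt_sqrt zero_le_one]; norm_num
    exact hr2.trans_lt ((div_lt_one (by linarith)).2 this)
  have hmem := one_sub_sqrt_div_mem_Icc hr1 hr_lt_one.le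
  have hval := add_mul_one_sub_sq_div_eq_at_opt hr0 hr_lt_one
  rw [two_mul_sqrt_two_mul_sqrt]
  refine ⟨⟨⟨_, hmem, hval.symm⟩, ?_⟩, hmem, hval⟩
  rintro y ⟨a, ⟨ha0, ha1⟩, rfl⟩
  exact add_mul_one_sub_sq_div_le hr0 hr_lt_one.le (by nlinarith)
end

section
/- Let h(z) = \sum_{k=0}^\infty a_k z^k and g(z) = \sum_{k=1}^\infty b_k z^k be analytic on the unit disk with |h(z)| \le 1 and |g'(z)| \le |h'(z)| for all |z| < 1. Then for all 0 \le r \le 1/5, |a_0| + \sum_{k=1}^\infty (|a_k| + |b_k|) r^k \le 1, and the radius 1/5 is sharp. -/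
/-!
Write `g' = ω h'` with `ω` holomorphic and `|ω| ≤ 1` on the disk: `g'/h'` is bounded by `1`,
so its singularities are removable. Comparing coefficients,
`k |b_k| ≤ ∑_{i+j=k-1} |w_i| (j+1) |a_{j+1}|`, hence
`∑ |b_k| r^k ≤ (∑ |w_i| r^i) (∑_{k≥1} |a_k| r^k) ≤ ∑_{k≥1} |a_k| r^k`
as soon as Bohr's classical theorem applies to `ω`, i.e. for `r ≤ 1/3`. Wiener's inequality
`|a_k| ≤ 1 - |a_0|²` (Schwarz–Pick at `0` for the average of `h` over the rotations by the `k`-th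
roots of unity) bounds the whole sum by `|a_0| + 2 (1 - |a_0|²) r / (1 - r) ≤ 1` for `r ≤ 1/5`.
For sharpness take `h(z) = (α - z) / (1 - α z)` and `g = h - α`: the sum at `ρ` is
`α + 2 (1 - α²) ρ / (1 - α ρ)`, which exceeds `1` iff `ρ (2 + 3 α) > 1`, true for `α` near `1`
once `ρ > 1/5`.
-/

open Metric Set Filter Finset Function
open scoped Nat Topology ComplexConjugate

noncomputable section

theorem IsPrimitiveRoot.sum_pow_mul_eq_ite {K : Type*} [Field K] {ζ : K} {k : ℕ}
    (hζ : IsPrimitiveRoot ζ k) (m : ℕ) :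
    ∑ i ∈ range k, ζ ^ (i * m) = if k ∣ m then (k : K) else 0 := by
  simp_rw [pow_mul']
  split_ifs with hdvd
  · simp [(hζ.pow_eq_one_iff_dvd m).2 hdvd]
  · rw [geom_sum_eq (mt (hζ.pow_eq_one_iff_dvd m).1 hdvd), ← pow_mul, mul_comm, pow_mul,
      hζ.pow_eq_one, one_pow, sub_self, zero_div]

namespace Bohr

def HasSeriesOnUnitDisk (c : ℕ → ℂ) (f : ℂ → ℂ) : Prop :=
  ∀ z : ℂ, ‖z‖ < 1 → HasSum (fun k => c k * z ^ k) (f z)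

namespace HasSeriesOnUnitDisk

variable {c d : ℕ → ℂ} {f g : ℂ → ℂ}

theorem hasFPowerSeriesOnBall (hc : HasSeriesOnUnitDisk c f) :
    HasFPowerSeriesOnBall f (FormalMultilinearSeries.ofScalars ℂ c) 0 1 := by
  refine ⟨ENNReal.le_of_forall_nnreal_lt fun r hr => ?_, one_pos, fun {y} hy => ?_⟩
  · have hr1 : ‖(r : ℂ)‖ < 1 := by simpa using hr
    refine (FormalMultilinearSeries.ofScalars ℂ c).le_radius_of_tendsto (l := 0) ?_
    simpa [FormalMultilinearSeries.ofScalars_norm] using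
      (hc r hr1).summable.tendsto_atTop_zero.norm
  · rw [← ENNReal.ofReal_one, Metric.eball_ofReal, mem_ball_zero_iff] at hy
    simpa [FormalMultilinearSeries.ofScalars_apply_eq, mul_comm] using hc y hy

theorem differentiableOn (hc : HasSeriesOnUnitDisk c f) : DifferentiableOn ℂ f (ball 0 1) := by
  simpa [← ENNReal.ofReal_one, Metric.eball_ofReal] using hc.hasFPowerSeriesOnBall.differentiableOn

theorem coeff_eq (hc : HasSeriesOnUnitDisk c f) (n : ℕ) :
    c n = iteratedDeriv n f 0 / n ! := by
  have := hc.hasFPowerSeriesOnBall.factorial_smul 1 n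
  rw [iteratedDeriv_eq_iteratedFDeriv, ← this, FormalMultilinearSeries.ofScalars_apply_eq]
  simp [mul_div_cancel_left₀ _ (Nat.cast_ne_zero.2 n.factorial_ne_zero : (n ! : ℂ) ≠ 0)]

theorem of_differentiableOn (hf : DifferentiableOn ℂ f (ball 0 1)) :
    HasSeriesOnUnitDisk (fun n => iteratedDeriv n f 0 / n !) f := fun z hz => by
  simpa [div_eq_inv_mul, mul_comm, mul_left_comm, mul_assoc] using
    Complex.hasSum_taylorSeries_on_ball hf (by simpa using hz)

theorem unique (hc : HasSeriesOnUnitDisk c f) (hd : HasSeriesOnUnitDisk d f) : c = d :=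
  funext fun n => (hc.coeff_eq n).trans (hd.coeff_eq n).symm

theorem apply_zero (hc : HasSeriesOnUnitDisk c f) : f 0 = c 0 := by
  simp [hc.coeff_eq 0]

theorem hasSeriesOnUnitDisk_deriv (hc : HasSeriesOnUnitDisk c f) :
    HasSeriesOnUnitDisk (fun k => (k + 1) * c (k + 1)) (deriv f) := by
  intro z hz
  convert of_differentiableOn (hc.differentiableOn.deriv isOpen_ball) z hz using 3 with k
  dsimp only
  rw [← iteratedDeriv_succ', hc.coeff_eq, Nat.factorial_succ]
  push_cast
  field_simp

theorem deriv_zero (hc : HasSeriesOnUnitDisk c f) : deriv f 0 = c 1 := by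
  simp [hc.hasSeriesOnUnitDisk_deriv.apply_zero]

theorem summable_norm_mul_pow (hc : HasSeriesOnUnitDisk c f) {r : ℝ} (hr0 : 0 ≤ r)
    (hr1 : r < 1) : Summable fun k => ‖c k‖ * r ^ k := by
  lift r to NNReal using hr0
  simpa [FormalMultilinearSeries.ofScalars_norm] using
    (FormalMultilinearSeries.ofScalars ℂ c).summable_norm_mul_pow
      ((ENNReal.coe_lt_one_iff.2 hr1).trans_le hc.hasFPowerSeriesOnBall.r_le)

theorem congr (hc : HasSeriesOnUnitDisk c f) (hfg : ∀ z : ℂ, ‖z‖ < 1 → f z = g z) :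
    HasSeriesOnUnitDisk c g := fun z hz => hfg z hz ▸ hc z hz

theorem mul (hc : HasSeriesOnUnitDisk c f) (hd : HasSeriesOnUnitDisk d g) :
    HasSeriesOnUnitDisk (fun n => ∑ ij ∈ antidiagonal n, c ij.1 * d ij.2)
      (fun z => f z * g z) := by
  intro z hz
  have hc' : Summable fun k => ‖c k * z ^ k‖ := by
    simpa [norm_mul, norm_pow] using hc.summable_norm_mul_pow (norm_nonneg z) hz
  have hd' : Summable fun k => ‖d k * z ^ k‖ := by
    simpa [norm_mul, norm_pow] using hd.summable_norm_mul_pow (norm_nonneg z) hz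
  have hprod := (summable_norm_sum_mul_antidiagonal_of_summable_norm hc' hd').of_norm.hasSum
  rw [← tsum_mul_tsum_eq_tsum_sum_antidiagonal_of_summable_norm hc' hd', (hc z hz).tsum_eq,
    (hd z hz).tsum_eq] at hprod
  refine hprod.congr_fun fun n => ?_
  rw [Finset.sum_mul]
  refine sum_congr rfl fun ij hij => ?_
  rw [← mem_antidiagonal.1 hij, pow_add]
  ring

theorem update_zero (hc : HasSeriesOnUnitDisk c f) :
    HasSeriesOnUnitDisk (update c 0 0) fun z => f z - c 0 := fun z hz => by
  have h := (hc z hz).update 0 0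
  rw [show 0 - c 0 * z ^ 0 + f z = f z - c 0 by ring] at h
  refine h.congr_fun fun k => ?_
  rcases eq_or_ne k 0 with rfl | hk <;> simp [*]

end HasSeriesOnUnitDisk

def mobius (a u : ℂ) : ℂ := (u - a) / (1 - conj a * u)

section mobius

variable {a u : ℂ}

theorem one_sub_conj_mul_ne_zero (ha : ‖a‖ < 1) (hu : ‖u‖ ≤ 1) : 1 - conj a * u ≠ 0 := by
  refine sub_ne_zero.2 fun h => ?_
  have : ‖conj a * u‖ < 1 := by
    rw [norm_mul, Complex.norm_conj]
    nlinarith [norm_nonneg a, norm_nonneg u]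
  simp [← h] at this

theorem norm_mobius_le_one (ha : ‖a‖ < 1) (hu : ‖u‖ ≤ 1) : ‖mobius a u‖ ≤ 1 := by
  rw [mobius, norm_div, div_le_one (norm_pos_iff.2 (one_sub_conj_mul_ne_zero ha hu))]
  have key : Complex.normSq (1 - conj a * u) - Complex.normSq (u - a)
      = (1 - Complex.normSq a) * (1 - Complex.normSq u) := by
    simp only [Complex.normSq_apply, Complex.sub_re, Complex.sub_im, Complex.mul_re,
      Complex.mul_im, Complex.one_re, Complex.one_im, Complex.conj_re, Complex.conj_im]
    ring
  rw [← Complex.sq_norm, ← Complex.sq_norm, ← Complex.sq_norm, ← Complex.sq_norm] at key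
  refine (sq_le_sq₀ (norm_nonneg _) (norm_nonneg _)).1 ?_
  have ha2 : ‖a‖ ^ 2 ≤ 1 := pow_le_one₀ (norm_nonneg a) ha.le
  have hu2 : ‖u‖ ^ 2 ≤ 1 := pow_le_one₀ (norm_nonneg u) hu
  nlinarith [mul_nonneg (sub_nonneg.2 ha2) (sub_nonneg.2 hu2)]

theorem mobius_self : mobius a a = 0 := by simp [mobius]

theorem hasDerivAt_mobius (hd : 1 - conj a * u ≠ 0) :
    HasDerivAt (mobius a) ((1 - conj a * a) / (1 - conj a * u) ^ 2) u := by
  have h : HasDerivAt (mobius a) _ u := ((hasDerivAt_id u).sub_const a).div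
    (((hasDerivAt_id u).const_mul (conj a)).const_sub 1) hd
  refine h.congr_deriv ?_
  simp only [id]
  ring

theorem hasDerivAt_mobius_self (ha : ‖a‖ < 1) :
    HasDerivAt (mobius a) (((1 - ‖a‖ ^ 2)⁻¹ : ℝ) : ℂ) a := by
  have hconj : conj a * a = ((‖a‖ ^ 2 : ℝ) : ℂ) := by simpa using Complex.conj_mul' a
  have hne : (1 : ℂ) - ((‖a‖ ^ 2 : ℝ) : ℂ) ≠ 0 := by
    exact_mod_cast (by nlinarith [norm_nonneg a] : (1 : ℝ) - ‖a‖ ^ 2 ≠ 0)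
  refine (hasDerivAt_mobius (one_sub_conj_mul_ne_zero ha ha.le)).congr_deriv ?_
  rw [hconj]
  push_cast at hne ⊢
  field_simp

end mobius

theorem norm_deriv_zero_le_one_sub_sq {f : ℂ → ℂ} (hf : DifferentiableOn ℂ f (ball 0 1))
    (hmaps : MapsTo f (ball 0 1) (closedBall 0 1)) : ‖deriv f 0‖ ≤ 1 - ‖f 0‖ ^ 2 := by
  have hf0 : ‖f 0‖ ≤ 1 := by simpa using hmaps (mem_ball_self one_pos)
  rcases hf0.eq_or_lt with hf0 | hf0
  · have hmax : IsMaxOn (norm ∘ f) (ball 0 1) 0 := fun z hz => by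
      simpa [hf0] using hmaps hz
    have hconst : f =ᶠ[𝓝 0] fun _ => f 0 :=
      Filter.eventually_of_mem (ball_mem_nhds 0 one_pos)
        (Complex.eqOn_of_isPreconnected_of_isMaxOn_norm (convex_ball 0 1).isPreconnected
          isOpen_ball hf (mem_ball_self one_pos) hmax)
    simp [hconst.deriv_eq, hf0]
  · set a := f 0
    have hden : ∀ z ∈ ball (0 : ℂ) 1, 1 - conj a * f z ≠ 0 := fun z hz =>
      one_sub_conj_mul_ne_zero hf0 (by simpa using hmaps hz)
    have hχ : DifferentiableOn ℂ (mobius a ∘ f) (ball 0 1) := fun z hz =>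
      ((hasDerivAt_mobius (hden z hz)).differentiableAt.comp z
        (hf.differentiableAt (isOpen_ball.mem_nhds hz))).differentiableWithinAt
    have hmapsχ : MapsTo (mobius a ∘ f) (ball 0 1) (closedBall (mobius a (f 0)) 1) :=
      fun z hz => by simpa [a, mobius_self] using norm_mobius_le_one hf0 (by simpa using hmaps hz)
    have hschwarz := Complex.norm_deriv_le_one_of_mapsTo_ball hχ hmapsχ one_pos
    have hpos : 0 < 1 - ‖a‖ ^ 2 := by nlinarith [norm_nonneg a]
    rw [deriv_comp 0 (hasDerivAt_mobius_self hf0).differentiableAt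
      (hf.differentiableAt (ball_mem_nhds 0 one_pos)), (hasDerivAt_mobius_self hf0).deriv,
      norm_mul, Complex.norm_real, Real.norm_of_nonneg (inv_nonneg.2 hpos.le),
      inv_mul_le_iff₀ hpos, mul_one] at hschwarz
    exact hschwarz

namespace HasSeriesOnUnitDisk

variable {c : ℕ → ℂ} {f : ℂ → ℂ}

theorem hasSum_average_rotations (hc : HasSeriesOnUnitDisk c f) {ζ : ℂ} {k : ℕ} (hk : k ≠ 0)
    (hζ : IsPrimitiveRoot ζ k) {z : ℂ} (hz : ‖z‖ < 1) :
    HasSum (fun j => c (k * j) * z ^ (k * j)) ((k : ℂ)⁻¹ * ∑ i ∈ range k, f (ζ ^ i * z)) := by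
  have hrot : ∀ i, ‖ζ ^ i * z‖ < 1 := fun i => by simpa [hζ.norm'_eq_one hk] using hz
  have hsum := (hasSum_sum (s := range k) fun i _ => hc (ζ ^ i * z) (hrot i)).mul_left (k : ℂ)⁻¹
  have hfilter : ∀ m, (k : ℂ)⁻¹ * ∑ i ∈ range k, c m * (ζ ^ i * z) ^ m
      = if k ∣ m then c m * z ^ m else 0 := fun m => by
    have hsplit : ∑ i ∈ range k, c m * (ζ ^ i * z) ^ m
        = (∑ i ∈ range k, ζ ^ (i * m)) * (c m * z ^ m) := by
      rw [Finset.sum_mul]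
      refine sum_congr rfl fun i _ => ?_
      rw [mul_pow, ← pow_mul]
      ring
    rw [hsplit, hζ.sum_pow_mul_eq_ite]
    split_ifs <;> simp [hk]
  simp_rw [hfilter] at hsum
  refine ((mul_right_injective₀ hk).hasSum_iff fun m hm => ?_).2 hsum |>.congr_fun fun j => ?_
  · exact if_neg fun ⟨j, hj⟩ => hm ⟨j, hj.symm⟩
  · simp

theorem norm_coeff_le (hc : HasSeriesOnUnitDisk c f) (hf : ∀ z : ℂ, ‖z‖ < 1 → ‖f z‖ ≤ 1)
    {k : ℕ} (hk : k ≠ 0) : ‖c k‖ ≤ 1 - ‖c 0‖ ^ 2 := by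
  set ζ := Complex.exp (2 * Real.pi * Complex.I / k)
  have hζ : IsPrimitiveRoot ζ k := Complex.isPrimitiveRoot_exp k hk
  have hroot : ∀ w : ℂ, ‖w‖ < 1 → ‖w ^ ((k : ℂ)⁻¹)‖ < 1 := fun w hw => by
    rw [Complex.norm_cpow_inv_nat]
    exact Real.rpow_lt_one (norm_nonneg w) hw (by positivity)
  -- `ψ (z ^ k)` is the average of `f` over the rotations of `z` by `k`-th roots of unity
  set ψ : ℂ → ℂ := fun w => (k : ℂ)⁻¹ * ∑ i ∈ range k, f (ζ ^ i * w ^ ((k : ℂ)⁻¹))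
  have hψ : HasSeriesOnUnitDisk (fun j => c (k * j)) ψ := fun w hw => by
    simpa [pow_mul, Complex.cpow_nat_inv_pow w hk] using
      hc.hasSum_average_rotations hk hζ (hroot w hw)
  have hψ1 : MapsTo ψ (ball 0 1) (closedBall 0 1) := fun w hw => by
    rw [mem_ball_zero_iff] at hw
    rw [mem_closedBall_zero_iff, norm_mul, norm_inv, Complex.norm_natCast,
      inv_mul_le_one₀ (by positivity)]
    refine (norm_sum_le _ _).trans ?_
    simpa using Finset.sum_le_card_nsmul (range k) _ 1 fun i _ =>
      hf _ (by simpa [hζ.norm'_eq_one hk] using hroot w hw)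
  simpa [hψ.deriv_zero, hψ.apply_zero] using
    norm_deriv_zero_le_one_sub_sq hψ.differentiableOn hψ1

theorem tsum_norm_coeff_succ_mul_pow_le (hc : HasSeriesOnUnitDisk c f)
    (hf : ∀ z : ℂ, ‖z‖ < 1 → ‖f z‖ ≤ 1) {r : ℝ} (hr0 : 0 ≤ r) (hr1 : r < 1) :
    ∑' k, ‖c (k + 1)‖ * r ^ (k + 1) ≤ (1 - ‖c 0‖ ^ 2) * (r / (1 - r)) := by
  calc ∑' k, ‖c (k + 1)‖ * r ^ (k + 1)
      ≤ ∑' k, (1 - ‖c 0‖ ^ 2) * r * r ^ k := by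
        refine Summable.tsum_le_tsum (fun k => ?_)
          ((summable_nat_add_iff 1).2 (hc.summable_norm_mul_pow hr0 hr1))
          ((summable_geometric_of_lt_one hr0 hr1).mul_left _)
        rw [mul_assoc, ← pow_succ']
        exact mul_le_mul_of_nonneg_right (hc.norm_coeff_le hf k.succ_ne_zero) (by positivity)
    _ = (1 - ‖c 0‖ ^ 2) * (r / (1 - r)) := by
        rw [tsum_mul_left, tsum_geometric_of_lt_one hr0 hr1]
        ring

theorem tsum_norm_mul_pow_le_one (hc : HasSeriesOnUnitDisk c f)
    (hf : ∀ z : ℂ, ‖z‖ < 1 → ‖f z‖ ≤ 1) {r : ℝ} (hr0 : 0 ≤ r) (hr : r ≤ 1 / 3) :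
    ∑' k, ‖c k‖ * r ^ k ≤ 1 := by
  have hr1 : r < 1 := by linarith
  have htail := hc.tsum_norm_coeff_succ_mul_pow_le hf hr0 hr1
  have hq : r / (1 - r) ≤ 1 / 2 := by
    rw [div_le_iff₀ (by linarith)]
    linarith
  have hc0 : ‖c 0‖ ≤ 1 := hc.apply_zero ▸ hf 0 (by simp)
  have hhalf : (1 - ‖c 0‖ ^ 2) * (r / (1 - r)) ≤ (1 - ‖c 0‖ ^ 2) * (1 / 2) :=
    mul_le_mul_of_nonneg_left hq (by nlinarith [norm_nonneg (c 0)])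
  rw [(hc.summable_norm_mul_pow hr0 hr1).tsum_eq_zero_add, pow_zero, mul_one]
  nlinarith [sq_nonneg (1 - ‖c 0‖)]

end HasSeriesOnUnitDisk

/-- `p / q` with its removable singularities filled in; it vanishes near points around which `q`
vanishes identically, because `x / 0 = 0`. -/
def limDiv (p q : ℂ → ℂ) (z : ℂ) : ℂ :=
  limUnder (𝓝[≠] z) fun w => p w / q w

section limDiv

variable {p q : ℂ → ℂ} {U : Set ℂ} {z : ℂ}

theorem limDiv_eq_div (hp : ContinuousAt p z) (hq : ContinuousAt q z) (hqz : q z ≠ 0) :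
    limDiv p q z = p z / q z :=
  ((hp.div hq hqz).tendsto.mono_left nhdsWithin_le_nhds).limUnder_eq

theorem limDiv_eventuallyEq_zero (hq : q =ᶠ[𝓝 z] 0) : limDiv p q =ᶠ[𝓝 z] 0 :=
  hq.eventually_nhds.mono fun w hw => by
    have hquot : (fun y => p y / q y) =ᶠ[𝓝 w] fun _ => 0 := hw.mono fun y hy => by simp [hy]
    exact ((tendsto_const_nhds.congr' hquot.symm).mono_left nhdsWithin_le_nhds).limUnder_eq

theorem differentiableAt_limDiv_and_norm_le_one (hU : IsOpen U) (hp : DifferentiableOn ℂ p U)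
    (hq : DifferentiableOn ℂ q U) (hpq : ∀ w ∈ U, ‖p w‖ ≤ ‖q w‖) (hz : z ∈ U) :
    DifferentiableAt ℂ (limDiv p q) z ∧ ‖limDiv p q z‖ ≤ 1 := by
  have hdiv_of_ne : ∀ w ∈ U, q w ≠ 0 → limDiv p q w = p w / q w := fun w hw =>
    limDiv_eq_div (hp.continuousOn.continuousAt (hU.mem_nhds hw))
      (hq.continuousOn.continuousAt (hU.mem_nhds hw))
  have hnorm_div : ∀ w ∈ U, ‖p w / q w‖ ≤ 1 := fun w hw => by
    rw [norm_div]
    exact div_le_one_of_le₀ (hpq w hw) (norm_nonneg _)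
  rcases (hq.analyticAt (hU.mem_nhds hz)).eventually_eq_zero_or_eventually_ne_zero
    with hzero | hne
  · have h0 := limDiv_eventuallyEq_zero (p := p) hzero
    exact ⟨(differentiableAt_const 0).congr_of_eventuallyEq h0, by simp [h0.eq_of_nhds]⟩
  set V := {w | w ∈ U ∧ (w ≠ z → q w ≠ 0)}
  have hV : V ∈ 𝓝 z := Filter.inter_mem (hU.mem_nhds hz) (eventually_nhdsWithin_iff.1 hne)
  have hdiff : DifferentiableOn ℂ (fun w => p w / q w) (V \ {z}) := fun w hw =>
    ((hp.differentiableAt (hU.mem_nhds hw.1.1)).div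
      (hq.differentiableAt (hU.mem_nhds hw.1.1)) (hw.1.2 hw.2)).differentiableWithinAt
  have hbdd : BddAbove (norm ∘ (fun w => p w / q w) '' (V \ {z})) :=
    ⟨1, forall_mem_image.2 fun w hw => hnorm_div w hw.1.1⟩
  have hupdate : limDiv p q =ᶠ[𝓝 z] update (fun w => p w / q w) z (limDiv p q z) := by
    filter_upwards [hV] with w hw
    rcases eq_or_ne w z with rfl | hwz
    · simp
    · rw [update_of_ne hwz, hdiv_of_ne w hw.1 (hw.2 hwz)]
  have hdiffAt : DifferentiableAt ℂ (limDiv p q) z :=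
    ((Complex.differentiableOn_update_limUnder_of_bddAbove hV hdiff hbdd).differentiableAt
      hV).congr_of_eventuallyEq hupdate
  refine ⟨hdiffAt, le_of_tendsto
    (hdiffAt.continuousAt.tendsto.mono_left (nhdsWithin_le_nhds (s := {z}ᶜ))).norm ?_⟩
  filter_upwards [mem_nhdsWithin_of_mem_nhds hV, self_mem_nhdsWithin] with w hw hwz
  rw [hdiv_of_ne w hw.1 (hw.2 hwz)]
  exact hnorm_div w hw.1

theorem exists_differentiableOn_eq_mul_of_norm_le (hU : IsOpen U) (hp : DifferentiableOn ℂ p U)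
    (hq : DifferentiableOn ℂ q U) (hpq : ∀ w ∈ U, ‖p w‖ ≤ ‖q w‖) :
    ∃ ω : ℂ → ℂ, DifferentiableOn ℂ ω U ∧ (∀ w ∈ U, ‖ω w‖ ≤ 1) ∧
      ∀ w ∈ U, p w = ω w * q w := by
  refine ⟨limDiv p q,
    fun w hw => (differentiableAt_limDiv_and_norm_le_one hU hp hq hpq hw).1.differentiableWithinAt,
    fun w hw => (differentiableAt_limDiv_and_norm_le_one hU hp hq hpq hw).2, fun w hw => ?_⟩
  by_cases hqw : q w = 0
  · simpa [hqw] using hpq w hw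
  · rw [limDiv_eq_div (hp.continuousOn.continuousAt (hU.mem_nhds hw))
      (hq.continuousOn.continuousAt (hU.mem_nhds hw)) hqw, div_mul_cancel₀ _ hqw]

end limDiv

theorem tsum_mul_pow_le_tsum_mul_tsum {x u v : ℕ → ℝ} {r : ℝ} (hr : 0 ≤ r)
    (hx : ∀ n, 0 ≤ x n) (hu : ∀ n, 0 ≤ u n) (hv : ∀ n, 0 ≤ v n)
    (hxuv : ∀ n, x n ≤ ∑ ij ∈ antidiagonal n, u ij.1 * v ij.2)
    (hsu : Summable fun n => u n * r ^ n) (hsv : Summable fun n => v n * r ^ n) :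
    ∑' n, x n * r ^ n ≤ (∑' n, u n * r ^ n) * ∑' n, v n * r ^ n := by
  have hprod := hsu.mul_of_nonneg hsv (fun n => mul_nonneg (hu n) (pow_nonneg hr n))
    fun n => mul_nonneg (hv n) (pow_nonneg hr n)
  have hterm : ∀ n, x n * r ^ n
      ≤ ∑ ij ∈ antidiagonal n, u ij.1 * r ^ ij.1 * (v ij.2 * r ^ ij.2) := fun n => by
    calc x n * r ^ n ≤ (∑ ij ∈ antidiagonal n, u ij.1 * v ij.2) * r ^ n :=
          mul_le_mul_of_nonneg_right (hxuv n) (pow_nonneg hr n)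
      _ = _ := by
          rw [Finset.sum_mul]
          refine sum_congr rfl fun ij hij => ?_
          rw [← mem_antidiagonal.1 hij, pow_add]
          ring
  have hsum := summable_sum_mul_antidiagonal_of_summable_mul
    (f := fun n => u n * r ^ n) (g := fun n => v n * r ^ n) hprod
  rw [hsu.tsum_mul_tsum_eq_tsum_sum_antidiagonal hsv hprod]
  exact Summable.tsum_le_tsum hterm
    (hsum.of_nonneg_of_le (fun n => mul_nonneg (hx n) (pow_nonneg hr n)) hterm) hsum

theorem norm_coeff_succ_le_of_deriv_eq_mul {a b w : ℕ → ℂ} {h g ω : ℂ → ℂ}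
    (ha : HasSeriesOnUnitDisk a h) (hb : HasSeriesOnUnitDisk b g)
    (hω : HasSeriesOnUnitDisk w ω) (hgh : ∀ z : ℂ, ‖z‖ < 1 → deriv g z = ω z * deriv h z)
    (n : ℕ) : ‖b (n + 1)‖ ≤ ∑ ij ∈ antidiagonal n, ‖w ij.1‖ * ‖a (ij.2 + 1)‖ := by
  have hcoeff := congrFun (hb.hasSeriesOnUnitDisk_deriv.unique
    ((hω.mul ha.hasSeriesOnUnitDisk_deriv).congr fun z hz => (hgh z hz).symm)) n
  have hn : (0 : ℝ) < n + 1 := by positivity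
  refine le_of_mul_le_mul_left ?_ hn
  calc ((n : ℝ) + 1) * ‖b (n + 1)‖ = ‖((n : ℂ) + 1) * b (n + 1)‖ := by
        rw [norm_mul]; norm_cast
    _ ≤ ∑ ij ∈ antidiagonal n, ‖w ij.1‖ * ((ij.2 + 1 : ℕ) * ‖a (ij.2 + 1)‖) := by
        rw [hcoeff]
        refine (norm_sum_le _ _).trans_eq (sum_congr rfl fun ij _ => ?_)
        rw [norm_mul, norm_mul]
        norm_cast
    _ ≤ ∑ ij ∈ antidiagonal n, (n + 1) * (‖w ij.1‖ * ‖a (ij.2 + 1)‖) := by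
        refine sum_le_sum fun ij hij => ?_
        rw [mul_left_comm]
        gcongr
        exact_mod_cast Finset.Nat.antidiagonal.snd_lt hij
    _ = _ := (Finset.mul_sum _ _ _).symm

theorem tsum_norm_coeff_succ_le_of_norm_deriv_le {a b : ℕ → ℂ} {h g : ℂ → ℂ}
    (ha : HasSeriesOnUnitDisk a h) (hb : HasSeriesOnUnitDisk b g)
    (hd : ∀ z : ℂ, ‖z‖ < 1 → ‖deriv g z‖ ≤ ‖deriv h z‖) {r : ℝ} (hr0 : 0 ≤ r)
    (hr : r ≤ 1 / 3) :
    ∑' k, ‖b (k + 1)‖ * r ^ (k + 1) ≤ ∑' k, ‖a (k + 1)‖ * r ^ (k + 1) := by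
  have hr1 : r < 1 := by linarith
  obtain ⟨ω, hωd, hω1, hgh⟩ := exists_differentiableOn_eq_mul_of_norm_le isOpen_ball
    hb.hasSeriesOnUnitDisk_deriv.differentiableOn ha.hasSeriesOnUnitDisk_deriv.differentiableOn
    fun z hz => hd z (mem_ball_zero_iff.1 hz)
  have hω : HasSeriesOnUnitDisk (fun n => iteratedDeriv n ω 0 / n !) ω :=
    .of_differentiableOn hωd
  set w : ℕ → ℂ := fun n => iteratedDeriv n ω 0 / (n ! : ℂ)
  have hbohr := hω.tsum_norm_mul_pow_le_one (fun z hz => hω1 z (mem_ball_zero_iff.2 hz)) hr0 hr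
  have hcoeff (n : ℕ) : ‖b (n + 1)‖ * r
      ≤ ∑ ij ∈ antidiagonal n, ‖w ij.1‖ * (‖a (ij.2 + 1)‖ * r) := by
    simp_rw [← mul_assoc, ← Finset.sum_mul]
    exact mul_le_mul_of_nonneg_right (norm_coeff_succ_le_of_deriv_eq_mul ha hb hω
      (fun z hz => hgh z (mem_ball_zero_iff.2 hz)) n) hr0
  have hsa : Summable fun n => ‖a (n + 1)‖ * r * r ^ n := by
    simpa only [mul_assoc, ← pow_succ'] using
      (summable_nat_add_iff 1).2 (ha.summable_norm_mul_pow hr0 hr1)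
  have hmaj := tsum_mul_pow_le_tsum_mul_tsum hr0 (fun n => by positivity)
    (fun n => norm_nonneg _) (fun n => by positivity) hcoeff
    (hω.summable_norm_mul_pow hr0 hr1) hsa
  simp only [mul_assoc, ← pow_succ'] at hmaj
  exact hmaj.trans (mul_le_of_le_one_left (tsum_nonneg fun n => by positivity) hbohr)

def bohrSum (a b : ℕ → ℂ) (r : ℝ) : ℝ :=
  ‖a 0‖ + ∑' k, (‖a (k + 1)‖ + ‖b (k + 1)‖) * r ^ (k + 1)

theorem bohrSum_le_one {a b : ℕ → ℂ} {h g : ℂ → ℂ}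
    (ha : HasSeriesOnUnitDisk a h) (hb : HasSeriesOnUnitDisk b g)
    (hh : ∀ z : ℂ, ‖z‖ < 1 → ‖h z‖ ≤ 1) (hd : ∀ z : ℂ, ‖z‖ < 1 → ‖deriv g z‖ ≤ ‖deriv h z‖)
    {r : ℝ} (hr0 : 0 ≤ r) (hr : r ≤ 1 / 5) : bohrSum a b r ≤ 1 := by
  have hr1 : r < 1 := by linarith
  have hA := ha.tsum_norm_coeff_succ_mul_pow_le hh hr0 hr1
  have hB := tsum_norm_coeff_succ_le_of_norm_deriv_le ha hb hd hr0 (by linarith)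
  have hq : r / (1 - r) ≤ 1 / 4 := by
    rw [div_le_iff₀ (by linarith)]
    linarith
  have ha0 : ‖a 0‖ ≤ 1 := ha.apply_zero ▸ hh 0 (by simp)
  have hquarter : (1 - ‖a 0‖ ^ 2) * (r / (1 - r)) ≤ (1 - ‖a 0‖ ^ 2) * (1 / 4) :=
    mul_le_mul_of_nonneg_left hq (by nlinarith [norm_nonneg (a 0)])
  simp_rw [bohrSum, add_mul]
  rw [Summable.tsum_add ((summable_nat_add_iff 1).2 (ha.summable_norm_mul_pow hr0 hr1))
    ((summable_nat_add_iff 1).2 (hb.summable_norm_mul_pow hr0 hr1))]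
  nlinarith [sq_nonneg (1 - ‖a 0‖)]

def blaschkeCoeff (α : ℝ) : ℕ → ℂ
  | 0 => α
  | n + 1 => ((-(1 - α ^ 2) * α ^ n : ℝ) : ℂ)

theorem hasSeriesOnUnitDisk_blaschkeCoeff {α : ℝ} (hα0 : 0 ≤ α) (hα1 : α < 1) :
    HasSeriesOnUnitDisk (blaschkeCoeff α) fun z => -mobius α z := fun z hz => by
  have hαz : ‖(α : ℂ) * z‖ < 1 := by
    rw [norm_mul, Complex.norm_real, Real.norm_of_nonneg hα0]
    nlinarith [norm_nonneg z]
  have hden : 1 - (α : ℂ) * z ≠ 0 := by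
    simpa using one_sub_conj_mul_ne_zero (a := α) (u := z) (by simpa [abs_of_nonneg hα0]) hz.le
  have htail := (hasSum_geometric_of_norm_lt_one hαz).mul_left (-(1 - (α : ℂ) ^ 2) * z)
  rw [show -(1 - (α : ℂ) ^ 2) * z * (1 - α * z)⁻¹ = -mobius α z - blaschkeCoeff α 0 * z ^ 0 by
    simp only [mobius, Complex.conj_ofReal, blaschkeCoeff]
    field_simp
    ring] at htail
  refine (hasSum_nat_add_iff' 1).1 ?_
  rw [Finset.sum_range_one]
  refine htail.congr_fun fun n => ?_
  simp only [blaschkeCoeff]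
  push_cast
  ring

theorem norm_blaschkeCoeff_succ {α : ℝ} (hα0 : 0 ≤ α) (hα1 : α ≤ 1) (n : ℕ) :
    ‖blaschkeCoeff α (n + 1)‖ = (1 - α ^ 2) * α ^ n := by
  rw [blaschkeCoeff, Complex.norm_real, Real.norm_eq_abs, neg_mul, abs_neg,
    abs_of_nonneg (by have := pow_le_one₀ hα0 hα1 (n := 2); positivity)]

theorem bohrSum_blaschkeCoeff {α ρ : ℝ} (hα0 : 0 ≤ α) (hα1 : α ≤ 1) (hρ0 : 0 ≤ ρ)
    (hρ1 : ρ < 1) :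
    bohrSum (blaschkeCoeff α) (update (blaschkeCoeff α) 0 0) ρ
      = α + 2 * (1 - α ^ 2) * ρ / (1 - α * ρ) := by
  have hαρ : α * ρ < 1 := by nlinarith
  have hterm (k : ℕ) : (‖blaschkeCoeff α (k + 1)‖
      + ‖update (blaschkeCoeff α) 0 0 (k + 1)‖) * ρ ^ (k + 1)
      = 2 * (1 - α ^ 2) * ρ * (α * ρ) ^ k := by
    rw [update_of_ne k.succ_ne_zero, norm_blaschkeCoeff_succ hα0 hα1]
    ring
  rw [bohrSum, tsum_congr hterm, tsum_mul_left, tsum_geometric_of_lt_one (by positivity) hαρ,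
    blaschkeCoeff, Complex.norm_real, Real.norm_of_nonneg hα0, div_eq_mul_inv]

theorem one_lt_add_div_of_one_lt_mul {α ρ : ℝ} (hα1 : α < 1) (hαρ : α * ρ < 1)
    (h : 1 < ρ * (2 + 3 * α)) : 1 < α + 2 * (1 - α ^ 2) * ρ / (1 - α * ρ) := by
  rw [← sub_lt_iff_lt_add', lt_div_iff₀ (by linarith)]
  nlinarith

end Bohr

end

/-- Bohr radius for harmonic mappings with bounded analytic part: if `|h| ≤ 1` and
`|g'| ≤ |h'|` on the disk, then for `0 ≤ r ≤ 1/5`,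
`|a₀| + ∑_{k≥1}(|a_k|+|b_k|) r^k ≤ 1`, and the radius `1/5` is sharp. -/
theorem stmt_12 :
    (∀ (h g : ℂ → ℂ) (a b : ℕ → ℂ),
      (∀ z : ℂ, ‖z‖ < 1 → HasSum (fun k : ℕ => a k * z ^ k) (h z)) →
      (∀ z : ℂ, ‖z‖ < 1 → HasSum (fun k : ℕ => b k * z ^ k) (g z)) →
      b 0 = 0 →
      (∀ z : ℂ, ‖z‖ < 1 → ‖h z‖ ≤ 1) →
      (∀ z : ℂ, ‖z‖ < 1 → ‖deriv g z‖ ≤ ‖deriv h z‖) →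
      ∀ r : ℝ, 0 ≤ r → r ≤ 1 / 5 →
        ‖a 0‖ + ∑' k : ℕ, (‖a (k + 1)‖ + ‖b (k + 1)‖) * r ^ (k + 1) ≤ 1) ∧
    (∀ ρ : ℝ, 1 / 5 < ρ → ρ < 1 →
      ∃ (h g : ℂ → ℂ) (a b : ℕ → ℂ),
        (∀ z : ℂ, ‖z‖ < 1 → HasSum (fun k : ℕ => a k * z ^ k) (h z)) ∧
        (∀ z : ℂ, ‖z‖ < 1 → HasSum (fun k : ℕ => b k * z ^ k) (g z)) ∧
        b 0 = 0 ∧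
        (∀ z : ℂ, ‖z‖ < 1 → ‖h z‖ ≤ 1) ∧
        (∀ z : ℂ, ‖z‖ < 1 → ‖deriv g z‖ ≤ ‖deriv h z‖) ∧
        1 < ‖a 0‖ + ∑' k : ℕ, (‖a (k + 1)‖ + ‖b (k + 1)‖) * ρ ^ (k + 1)) := by
  refine ⟨fun h g a b ha hb _ hh hd r hr0 hr => Bohr.bohrSum_le_one ha hb hh hd hr0 hr,
    fun ρ hρ hρ1 => ?_⟩
  have hρ0 : 0 < ρ := by linarith
  set α := (1 + ρ) / (6 * ρ) with hα_def
  have hα0 : 0 ≤ α := by positivity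
  have hα1 : α < 1 := by
    rw [div_lt_one (by positivity)]
    linarith
  have hα : 1 < ρ * (2 + 3 * α) := by
    rw [show ρ * (2 + 3 * α) = 2 * ρ + (1 + ρ) / 2 by rw [hα_def]; field_simp; ring]
    linarith
  have ha := Bohr.hasSeriesOnUnitDisk_blaschkeCoeff hα0 hα1
  refine ⟨_, _, _, _, ha, ha.update_zero, update_self .., fun z hz => ?_, fun z _ => by simp, ?_⟩
  · rw [norm_neg]
    exact Bohr.norm_mobius_le_one (by simpa [abs_of_nonneg hα0]) hz.le
  · exact (Bohr.one_lt_add_div_of_one_lt_mul hα1 (by nlinarith) hα).trans_eq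
      (Bohr.bohrSum_blaschkeCoeff hα0 hα1.le hρ0.le hρ1).symm
end
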